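/- arXiv:1307.5038 — 3 statements merged into one kernel-verified Lean document; each statement's English description precedes it below -/
import Mathlib

section
/- For A ∈ M_n(ℂ), a unit vector x ∈ ℂ^n, and r > 0, the image f_A(S ∩ B_r) is a convex subset of ℂ, where S is the unit sphere of ℂ^n and B_r is the closed ball of radius r around x. -/
/-!
Let `y, z` be in the cap with `f(y) ≠ f(z)`; replacing `T` by an affine combination of `T` and
the identity we may assume `f(y) = 0` and `f(z) = 1`. After rotating the phase of `z`, `f` is real
on the real span of `y` and `z`, so along `u(σ) = cos σ • y + sin σ • z` the Rayleigh quotient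
`f(u)/‖u‖²` is continuous, vanishes at `σ = 0, π` and equals `1` at `σ = π/2`. Since `f` is
phase invariant, membership in the cap may be relaxed to the phase-invariant cone
`c‖u‖ ≤ |⟨x, u⟩|`. On `u(σ)` this is a quadratic inequality in `(cos σ, sin σ)` whose square terms
are nonnegative, and the sign of `cos σ sin σ` can be chosen to make the cross term nonnegative
on one of the quarter circles `[0, π/2]` or `[π/2, π]`. The intermediate value theorem on that
quarter circle gives a vector with any prescribed quotient in `[0, 1]`, and rescaling it by a
complex scalar puts it in the cap.
-/

open Matrix

/-- The map `f_A(x) = x* A x` on `ℂ^n` (with the Euclidean norm). -/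
noncomputable def numRangeMap {n : ℕ} (A : Matrix (Fin n) (Fin n) ℂ)
    (x : EuclideanSpace ℂ (Fin n)) : ℂ :=
  star (x : Fin n → ℂ) ⬝ᵥ A.mulVec (x : Fin n → ℂ)

open Real Set
open scoped InnerProductSpace ComplexConjugate

lemma Complex.exists_norm_eq_one_mul_eq_norm (z : ℂ) : ∃ ε : ℂ, ‖ε‖ = 1 ∧ ε * z = ‖z‖ := by
  refine ⟨Complex.exp (-z.arg * Complex.I), by exact_mod_cast Complex.norm_exp_ofReal_mul_I _, ?_⟩
  nth_rw 2 [← Complex.norm_mul_exp_arg_mul_I z]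
  rw [mul_left_comm, ← Complex.exp_add]
  simp

section

variable {E : Type*} [NormedAddCommGroup E] [InnerProductSpace ℂ E]

noncomputable def numRangeFun (T : E →ₗ[ℂ] E) (w : E) : ℂ := ⟪w, T w⟫_ℂ

def sphereCap (x : E) (c : ℝ) : Set E := {w | ‖w‖ = 1 ∧ c ≤ (⟪x, w⟫_ℂ).re}

/-- Its nonzero elements are exactly the complex multiples of elements of `sphereCap x c`. -/
def capCone (x : E) (c : ℝ) : Set E := {u | c * ‖u‖ ≤ ‖⟪x, u⟫_ℂ‖}

lemma sphereCap_subset_capCone (x : E) (c : ℝ) : sphereCap x c ⊆ capCone x c := fun v hv => by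
  rw [capCone, Set.mem_ofPred_eq, hv.1, mul_one]
  exact hv.2.trans (Complex.re_le_norm _)

lemma smul_mem_capCone {x u : E} {c : ℝ} (hu : u ∈ capCone x c) (a : ℂ) :
    a • u ∈ capCone x c := by
  rw [capCone, Set.mem_ofPred_eq, norm_smul, inner_smul_right, norm_mul, mul_left_comm]
  exact mul_le_mul_of_nonneg_left hu (norm_nonneg a)

variable (T : E →ₗ[ℂ] E)

lemma numRangeFun_smul (c : ℂ) (w : E) :
    numRangeFun T (c • w) = ‖c‖ ^ 2 * numRangeFun T w := by
  rw [numRangeFun, numRangeFun, map_smul, inner_smul_left, inner_smul_right, ← mul_assoc,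
    Complex.conj_mul']

lemma numRangeFun_ofReal_smul_add_ofReal_smul (s t : ℝ) (y z : E) :
    numRangeFun T ((s : ℂ) • y + (t : ℂ) • z) = s ^ 2 * numRangeFun T y
      + s * t * (⟪y, T z⟫_ℂ + ⟪z, T y⟫_ℂ) + t ^ 2 * numRangeFun T z := by
  simp only [numRangeFun, map_add, map_smul, inner_add_left, inner_add_right, inner_smul_left,
    inner_smul_right, Complex.conj_ofReal]
  ring

lemma numRangeFun_smul_sub_smul_id {w : E} (hw : ‖w‖ = 1) (d e : ℂ) :
    numRangeFun (d • (T - e • LinearMap.id)) w = d * (numRangeFun T w - e) := by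
  simp [numRangeFun, inner_self_eq_norm_sq_to_K, hw]

lemma exists_norm_eq_one_im_inner_add_inner_eq_zero (y z : E) :
    ∃ μ : ℂ, ‖μ‖ = 1 ∧ (⟪y, T (μ • z)⟫_ℂ + ⟪μ • z, T y⟫_ℂ).im = 0 := by
  obtain ⟨μ, hμ, hμd⟩ :=
    Complex.exists_norm_eq_one_mul_eq_norm (⟪y, T z⟫_ℂ - conj ⟪z, T y⟫_ℂ)
  refine ⟨μ, hμ, ?_⟩
  have hd := congrArg Complex.im hμd
  rw [map_smul, inner_smul_right, inner_smul_left]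
  simp only [Complex.ofReal_im, Complex.mul_im, Complex.sub_re, Complex.sub_im, Complex.conj_re,
    Complex.conj_im, Complex.add_im] at hd ⊢
  linarith

lemma cos_smul_add_sin_smul_ne_zero {y z : E} (hyz : ‖y‖ = ‖z‖)
    (hq : numRangeFun T y ≠ numRangeFun T z) (σ : ℝ) :
    (cos σ : ℂ) • y + (sin σ : ℂ) • z ≠ 0 := by
  intro h
  have h' : (cos σ : ℂ) • y = -(sin σ : ℂ) • z := by
    rw [neg_smul]; exact eq_neg_of_add_eq_zero_left h
  have hnorm : |cos σ| * ‖y‖ = |sin σ| * ‖z‖ := by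
    simpa only [norm_smul, norm_neg, Complex.norm_real, Real.norm_eq_abs] using congrArg norm h'
  have hq' := congrArg (numRangeFun T) h'
  simp only [numRangeFun_smul, norm_neg, Complex.norm_real, Real.norm_eq_abs] at hq'
  rcases eq_or_ne z 0 with rfl | hz
  · rw [norm_zero, norm_eq_zero] at hyz
    exact hq (by rw [hyz])
  have hcs : |cos σ| = |sin σ| := by
    rw [hyz] at hnorm
    exact mul_right_cancel₀ (norm_ne_zero_iff.2 hz) hnorm
  have hc : ((|cos σ| : ℝ) : ℂ) ^ 2 ≠ 0 := by
    have h := sin_sq_add_cos_sq σ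
    rw [← sq_abs (sin σ), ← hcs, sq_abs] at h
    exact_mod_cast (show |cos σ| ^ 2 ≠ 0 by rw [sq_abs]; linarith)
  rw [← hcs] at hq'
  exact hq (mul_left_cancel₀ hc hq')

lemma ofReal_smul_add_ofReal_smul_mem_capCone {x y z : E} {c : ℝ} (hc : 0 ≤ c)
    (hy : y ∈ capCone x c) (hz : z ∈ capCone x c) {s t : ℝ}
    (hst : 0 ≤ s * t * ((conj ⟪x, y⟫_ℂ * ⟪x, z⟫_ℂ).re - c ^ 2 * (⟪y, z⟫_ℂ).re)) :
    (s : ℂ) • y + (t : ℂ) • z ∈ capCone x c := by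
  have hu : ‖(s : ℂ) • y + (t : ℂ) • z‖ ^ 2
      = s ^ 2 * ‖y‖ ^ 2 + 2 * (s * t * (⟪y, z⟫_ℂ).re) + t ^ 2 * ‖z‖ ^ 2 := by
    rw [@norm_add_sq ℂ, norm_smul, norm_smul, inner_smul_left, inner_smul_right,
      Complex.conj_ofReal, ← mul_assoc, ← Complex.ofReal_mul, RCLike.re_to_complex,
      Complex.re_ofReal_mul, Complex.norm_real, Complex.norm_real, Real.norm_eq_abs,
      Real.norm_eq_abs, mul_pow, mul_pow, sq_abs, sq_abs]
  have hxu : ‖⟪x, (s : ℂ) • y + (t : ℂ) • z⟫_ℂ‖ ^ 2 = s ^ 2 * ‖⟪x, y⟫_ℂ‖ ^ 2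
      + 2 * (s * t * (conj ⟪x, y⟫_ℂ * ⟪x, z⟫_ℂ).re) + t ^ 2 * ‖⟪x, z⟫_ℂ‖ ^ 2 := by
    rw [inner_add_right, inner_smul_right, inner_smul_right]
    simp only [Complex.sq_norm, Complex.normSq_apply, Complex.add_re, Complex.add_im,
      Complex.mul_re, Complex.mul_im, Complex.ofReal_re, Complex.ofReal_im, Complex.conj_re,
      Complex.conj_im]
    ring
  have hy2 : (c * ‖y‖) ^ 2 ≤ ‖⟪x, y⟫_ℂ‖ ^ 2 := pow_le_pow_left₀ (by positivity) hy 2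
  have hz2 : (c * ‖z‖) ^ 2 ≤ ‖⟪x, z⟫_ℂ‖ ^ 2 := pow_le_pow_left₀ (by positivity) hz 2
  rw [mul_pow] at hy2 hz2
  refine (pow_le_pow_iff_left₀ (by positivity) (norm_nonneg _) two_ne_zero).1 ?_
  rw [mul_pow, hu, hxu]
  nlinarith [mul_nonneg (sq_nonneg s) (sub_nonneg.2 hy2),
    mul_nonneg (sq_nonneg t) (sub_nonneg.2 hz2)]

lemma exists_arc_subset_capCone {x y z : E} {c : ℝ} (hy : y ∈ capCone x c)
    (hz : z ∈ capCone x c) :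
    ∃ a ∈ ({0, π} : Set ℝ), ∀ σ ∈ uIcc a (π / 2),
      (cos σ : ℂ) • y + (sin σ : ℂ) • z ∈ capCone x c := by
  rcases le_or_gt c 0 with hc | hc
  · exact ⟨0, by simp, fun σ _ =>
      (mul_nonpos_of_nonpos_of_nonneg hc (norm_nonneg _)).trans (norm_nonneg _)⟩
  set δ := (conj ⟪x, y⟫_ℂ * ⟪x, z⟫_ℂ).re - c ^ 2 * (⟪y, z⟫_ℂ).re
  rcases le_or_gt 0 δ with hδ | hδ
  · refine ⟨0, by simp, fun σ hσ => ofReal_smul_add_ofReal_smul_mem_capCone hc.le hy hz ?_⟩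
    rw [uIcc_of_le (by positivity)] at hσ
    have hcos : 0 ≤ cos σ := cos_nonneg_of_mem_Icc ⟨by linarith [hσ.1, pi_pos], hσ.2⟩
    have hsin : 0 ≤ sin σ := sin_nonneg_of_nonneg_of_le_pi hσ.1 (by linarith [hσ.2, pi_pos])
    exact mul_nonneg (mul_nonneg hcos hsin) hδ
  · refine ⟨π, by simp, fun σ hσ => ofReal_smul_add_ofReal_smul_mem_capCone hc.le hy hz ?_⟩
    rw [uIcc_of_ge (by linarith [pi_pos])] at hσ
    have hcos : cos σ ≤ 0 := cos_nonpos_of_pi_div_two_le_of_le hσ.1 (by linarith [hσ.2, pi_pos])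
    have hsin : 0 ≤ sin σ := sin_nonneg_of_nonneg_of_le_pi (by linarith [hσ.1, pi_pos]) hσ.2
    exact mul_nonneg_of_nonpos_of_nonpos (mul_nonpos_of_nonpos_of_nonneg hcos hsin) hδ.le

lemma exists_mem_sphereCap_numRangeFun_eq_div {x u : E} {c : ℝ} (hu0 : u ≠ 0)
    (hu : u ∈ capCone x c) :
    ∃ w ∈ sphereCap x c, numRangeFun T w = numRangeFun T u / (‖u‖ ^ 2 : ℝ) := by
  obtain ⟨ε, hε, hεx⟩ := Complex.exists_norm_eq_one_mul_eq_norm ⟪x, u⟫_ℂ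
  have hu' : 0 < ‖u‖ := norm_pos_iff.2 hu0
  have hnorm : ‖((‖u‖⁻¹ : ℝ) : ℂ) * ε‖ = ‖u‖⁻¹ := by
    rw [norm_mul, hε, Complex.norm_real, norm_inv, norm_norm, mul_one]
  refine ⟨(((‖u‖⁻¹ : ℝ) : ℂ) * ε) • u, ⟨?_, ?_⟩, ?_⟩
  · rw [norm_smul, hnorm, inv_mul_cancel₀ hu'.ne']
  · rw [inner_smul_right, mul_assoc, hεx, ← Complex.ofReal_mul, Complex.ofReal_re,
      le_inv_mul_iff₀ hu', mul_comm]
    exact hu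
  · rw [numRangeFun_smul, hnorm, div_eq_inv_mul]
    push_cast
    ring

lemma exists_mem_sphereCap_numRangeFun_eq {x y z : E} {c : ℝ} (hy : y ∈ sphereCap x c)
    (hz : z ∈ sphereCap x c) (hy0 : numRangeFun T y = 0) (hz1 : numRangeFun T z = 1) {t : ℝ}
    (ht : t ∈ Icc 0 1) : ∃ w ∈ sphereCap x c, numRangeFun T w = t := by
  -- rotating the phase of `z` makes `numRangeFun T` real on the real span of `y` and `z'`
  obtain ⟨μ, hμ, hξ⟩ := exists_norm_eq_one_im_inner_add_inner_eq_zero T y z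
  set z' := μ • z
  set ξ := (⟪y, T z'⟫_ℂ + ⟪z', T y⟫_ℂ).re
  have hz'1 : numRangeFun T z' = 1 := by simp [z', numRangeFun_smul, hμ, hz1]
  have hz'norm : ‖z'‖ = 1 := by rw [norm_smul, hμ, hz.1, one_mul]
  have hξ' : ⟪y, T z'⟫_ℂ + ⟪z', T y⟫_ℂ = ξ := Complex.ext rfl hξ
  set u : ℝ → E := fun σ => (cos σ : ℂ) • y + (sin σ : ℂ) • z'
  have hfu : ∀ σ, numRangeFun T (u σ) = (sin σ ^ 2 + cos σ * sin σ * ξ : ℝ) := fun σ => by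
    rw [numRangeFun_ofReal_smul_add_ofReal_smul, hy0, hz'1, hξ']
    push_cast
    ring
  have hu0 : ∀ σ, u σ ≠ 0 := cos_smul_add_sin_smul_ne_zero T (by rw [hy.1, hz'norm])
    (by rw [hy0, hz'1]; exact zero_ne_one)
  obtain ⟨a, ha, harc⟩ := exists_arc_subset_capCone
    (sphereCap_subset_capCone x c hy) (smul_mem_capCone (sphereCap_subset_capCone x c hz) μ)
  set G : ℝ → ℝ := fun σ => (sin σ ^ 2 + cos σ * sin σ * ξ) / ‖u σ‖ ^ 2
  have hG : Continuous G :=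
    Continuous.div (by fun_prop) (by fun_prop) fun σ => pow_ne_zero 2 (norm_ne_zero_iff.2 (hu0 σ))
  have hGa : G a = 0 := by rcases ha with rfl | rfl <;> simp [G]
  have hGπ2 : G (π / 2) = 1 := by simp [G, u, hz'norm]
  obtain ⟨σ, hσ, hGσ⟩ := (isPreconnected_uIcc (a := a) (b := π / 2)).intermediate_value
    left_mem_uIcc right_mem_uIcc hG.continuousOn (by rwa [hGa, hGπ2])
  obtain ⟨w, hw, hfw⟩ := exists_mem_sphereCap_numRangeFun_eq_div T (hu0 σ) (harc σ hσ)
  refine ⟨w, hw, ?_⟩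
  rw [hfw, hfu σ, ← hGσ, ← Complex.ofReal_div]

theorem convex_numRangeFun_image_sphereCap (x : E) (c : ℝ) :
    Convex ℝ (numRangeFun T '' sphereCap x c) := by
  rintro _ ⟨y, hy, rfl⟩ _ ⟨z, hz, rfl⟩ a b ha hb hab
  by_cases hyz : numRangeFun T y = numRangeFun T z
  · exact ⟨y, hy, by rw [← hyz, ← add_smul, hab, one_smul]⟩
  have hd : numRangeFun T z - numRangeFun T y ≠ 0 := sub_ne_zero.2 (Ne.symm hyz)
  set S := (numRangeFun T z - numRangeFun T y)⁻¹ • (T - numRangeFun T y • LinearMap.id)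
  have hS : ∀ w ∈ sphereCap x c, numRangeFun S w
      = (numRangeFun T z - numRangeFun T y)⁻¹ * (numRangeFun T w - numRangeFun T y) :=
    fun w hw => numRangeFun_smul_sub_smul_id T hw.1 _ _
  obtain ⟨w, hw, hSw⟩ := exists_mem_sphereCap_numRangeFun_eq S hy hz
    (by rw [hS y hy, sub_self, mul_zero]) (by rw [hS z hz, inv_mul_cancel₀ hd]) ⟨hb, by linarith⟩
  refine ⟨w, hw, ?_⟩
  rw [hS w hw, inv_mul_eq_iff_eq_mul₀ hd] at hSw
  obtain rfl : a = 1 - b := by linarith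
  rw [Complex.real_smul, Complex.real_smul]
  push_cast
  linear_combination hSw

lemma sphere_inter_closedBall_eq_sphereCap {x : E} (hx : ‖x‖ = 1) {r : ℝ} (hr : 0 ≤ r) :
    Metric.sphere 0 1 ∩ Metric.closedBall x r = sphereCap x (1 - r ^ 2 / 2) := by
  ext w
  simp only [mem_inter_iff, mem_sphere_zero_iff_norm, Metric.mem_closedBall, dist_eq_norm,
    sphereCap, Set.mem_ofPred_eq, and_congr_right_iff]
  intro hw
  rw [← sq_le_sq₀ (norm_nonneg _) hr, @norm_sub_sq ℂ, hw, hx, inner_re_symm, RCLike.re_to_complex]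
  constructor <;> intro h <;> linarith

end

lemma numRangeMap_eq_numRangeFun {n : ℕ} (A : Matrix (Fin n) (Fin n) ℂ) :
    numRangeMap A = numRangeFun (toEuclideanLin A) := by
  ext w
  rw [numRangeMap, numRangeFun, EuclideanSpace.inner_eq_star_dotProduct, dotProduct_comm]
  rfl

theorem stmt_3 {n : ℕ} (A : Matrix (Fin n) (Fin n) ℂ)
    (x : EuclideanSpace ℂ (Fin n)) (hx : ‖x‖ = 1) (r : ℝ) (hr : 0 < r) :
    Convex ℝ (numRangeMap A '' (Metric.sphere 0 1 ∩ Metric.closedBall x r)) := by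
  rw [sphere_inter_closedBall_eq_sphereCap hx hr.le, numRangeMap_eq_numRangeFun]
  exact convex_numRangeFun_image_sphereCap _ x _
end

section
/- For any A ∈ M_n(ℂ), the numerical range F(A) is convex. -/
open Matrix

/-- The numerical range `F(A)`. -/
noncomputable def numRange {n : ℕ} (A : Matrix (Fin n) (Fin n) ℂ) : Set ℂ :=
  numRangeMap A '' Metric.sphere 0 1

/-!
Given unit vectors `x`, `y` with `⟪x, T x⟫ ≠ ⟪y, T y⟫`, replacing `T` by
`(⟪x, T x⟫ - ⟪y, T y⟫)⁻¹ • (T - ⟪y, T y⟫ • id)` moves these two values to `1` and `0`, so it is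
enough to show that `[0, 1]` lies in the numerical range. Multiply `x` by a unimodular scalar
so that the cross term `⟪x, T y⟫ + ⟪y, T x⟫` becomes real. Then the quadratic form is real
along the line `z s = s • x + (1 - s) • y`, and this line never passes through `0`. So
`s ↦ ⟪z s, T (z s)⟫ / ‖z s‖ ^ 2` is a continuous real function that goes from `0` to `1`, and
the intermediate value theorem finishes the proof.
-/

open scoped InnerProductSpace ComplexConjugate
open Set

namespace LinearMap

variable {E : Type*} [NormedAddCommGroup E] [InnerProductSpace ℂ E]

noncomputable def numericalRange (T : E →ₗ[ℂ] E) : Set ℂ :=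
  (fun x => ⟪x, T x⟫_ℂ) '' Metric.sphere 0 1

variable (T : E →ₗ[ℂ] E)

lemma inner_map_self_smul (c : ℂ) (v : E) :
    ⟪c • v, T (c • v)⟫_ℂ = conj c * c * ⟪v, T v⟫_ℂ := by
  rw [map_smul, inner_smul_left, inner_smul_right, mul_assoc]

lemma inner_map_self_ofReal_smul_add (s t : ℝ) (x y : E) :
    ⟪(s : ℂ) • x + (t : ℂ) • y, T ((s : ℂ) • x + (t : ℂ) • y)⟫_ℂ =
      s ^ 2 * ⟪x, T x⟫_ℂ + s * t * (⟪x, T y⟫_ℂ + ⟪y, T x⟫_ℂ) + t ^ 2 * ⟪y, T y⟫_ℂ := by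
  simp only [map_add, map_smul, inner_add_left, inner_add_right, inner_smul_left,
    inner_smul_right, Complex.conj_ofReal]
  ring

lemma inner_smul_sub_smul_id_self (a b : ℂ) {x : E} (hx : ‖x‖ = 1) :
    ⟪x, (a • (T - b • LinearMap.id) : E →ₗ[ℂ] E) x⟫_ℂ = a * (⟪x, T x⟫_ℂ - b) := by
  simp [hx]

lemma div_norm_sq_mem_numericalRange {v : E} (hv : v ≠ 0) :
    ⟪v, T v⟫_ℂ / (‖v‖ ^ 2 : ℝ) ∈ numericalRange T := by
  refine ⟨((‖v‖⁻¹ : ℝ) : ℂ) • v, ?_, ?_⟩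
  · rw [mem_sphere_zero_iff_norm, norm_smul, Complex.norm_real, norm_inv, norm_norm,
      inv_mul_cancel₀ (norm_ne_zero_iff.mpr hv)]
  · simp only [inner_map_self_smul, Complex.conj_ofReal]
    push_cast
    field_simp

lemma exists_norm_eq_one_im_inner_map_add_eq_zero (x y : E) :
    ∃ β : ℂ, ‖β‖ = 1 ∧ (⟪β • x, T y⟫_ℂ + ⟪y, T (β • x)⟫_ℂ).im = 0 := by
  obtain ⟨c, hc, hcu⟩ := Complex.exists_norm_eq_mul_self (⟪x, T y⟫_ℂ - conj ⟪y, T x⟫_ℂ)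
  refine ⟨conj c, by rwa [Complex.norm_conj], ?_⟩
  have hreal : (c * (⟪x, T y⟫_ℂ - conj ⟪y, T x⟫_ℂ)).im = 0 := by rw [← hcu]; simp
  rw [map_smul, inner_smul_left, inner_smul_right, Complex.conj_conj]
  simp only [mul_sub, Complex.sub_im, Complex.add_im, Complex.mul_im, Complex.conj_re,
    Complex.conj_im] at hreal ⊢
  linarith

lemma ofReal_mem_numericalRange_of_im_eq_zero {x y : E} (hx : ‖x‖ = 1) (hy : ‖y‖ = 1)
    (hTx : ⟪x, T x⟫_ℂ = 1) (hTy : ⟪y, T y⟫_ℂ = 0) (hr : (⟪x, T y⟫_ℂ + ⟪y, T x⟫_ℂ).im = 0)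
    {t : ℝ} (ht : t ∈ Icc 0 1) : (t : ℂ) ∈ numericalRange T := by
  set r := (⟪x, T y⟫_ℂ + ⟪y, T x⟫_ℂ).re
  let z (s : ℝ) : E := (s : ℂ) • x + ((1 - s : ℝ) : ℂ) • y
  have hTz (s : ℝ) : ⟪z s, T (z s)⟫_ℂ = ((s ^ 2 + s * (1 - s) * r : ℝ) : ℂ) := by
    rw [inner_map_self_ofReal_smul_add, hTx, hTy, show _ + _ = (r : ℂ) from Complex.ext rfl hr]
    push_cast
    ring
  have hz (s : ℝ) : z s ≠ 0 := by
    intro h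
    -- evaluating the quadratic form on `s • x = -((1 - s) • y)` gives `s ^ 2 = 0`
    have hs := congrArg (fun v => ⟪v, T v⟫_ℂ) (eq_neg_of_add_eq_zero_left h)
    simp only [inner_map_self_smul, map_neg, inner_neg_left, inner_neg_right, neg_neg,
      Complex.conj_ofReal, hTx, hTy] at hs
    rw [mul_one, mul_zero, mul_self_eq_zero, Complex.ofReal_eq_zero] at hs
    have hy0 : y = 0 := by simpa [z, hs] using h
    simp [hy0] at hy
  let g (s : ℝ) : ℝ := (s ^ 2 + s * (1 - s) * r) / ‖z s‖ ^ 2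
  have hg : Continuous g :=
    by fun_prop (disch := exact fun s => pow_ne_zero 2 (norm_ne_zero_iff.mpr (hz s)))
  have hg0 : g 0 = 0 := by simp [g]
  have hg1 : g 1 = 1 := by simp [g, z, hx]
  obtain ⟨s, -, rfl⟩ := intermediate_value_Icc zero_le_one hg.continuousOn (hg0 ▸ hg1 ▸ ht)
  have hs := div_norm_sq_mem_numericalRange T (hz s)
  rwa [hTz, ← Complex.ofReal_div] at hs

lemma ofReal_mem_numericalRange {x y : E} (hx : ‖x‖ = 1) (hy : ‖y‖ = 1)
    (hTx : ⟪x, T x⟫_ℂ = 1) (hTy : ⟪y, T y⟫_ℂ = 0) {t : ℝ} (ht : t ∈ Icc 0 1) :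
    (t : ℂ) ∈ numericalRange T := by
  obtain ⟨β, hβ, hr⟩ := exists_norm_eq_one_im_inner_map_add_eq_zero T x y
  refine ofReal_mem_numericalRange_of_im_eq_zero T ?_ hy ?_ hTy hr ht
  · rw [norm_smul, hβ, hx, one_mul]
  · rw [inner_map_self_smul, Complex.conj_mul', hβ, hTx]
    norm_num

theorem convex_numericalRange : Convex ℝ (numericalRange T) := by
  rintro _ ⟨x, hx, rfl⟩ _ ⟨y, hy, rfl⟩ a b ha hb hab
  beta_reduce
  rw [mem_sphere_zero_iff_norm] at hx hy
  obtain hpq | hpq := eq_or_ne ⟪x, T x⟫_ℂ ⟪y, T y⟫_ℂ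
  · rw [hpq, ← add_smul, hab, one_smul]
    exact ⟨y, mem_sphere_zero_iff_norm.mpr hy, rfl⟩
  set S : E →ₗ[ℂ] E := (⟪x, T x⟫_ℂ - ⟪y, T y⟫_ℂ)⁻¹ • (T - ⟪y, T y⟫_ℂ • LinearMap.id)
  have hSx : ⟪x, S x⟫_ℂ = 1 := by
    rw [inner_smul_sub_smul_id_self T _ _ hx, inv_mul_cancel₀ (sub_ne_zero.mpr hpq)]
  have hSy : ⟪y, S y⟫_ℂ = 0 := by
    rw [inner_smul_sub_smul_id_self T _ _ hy, sub_self, mul_zero]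
  obtain ⟨w, hw, hSw⟩ := ofReal_mem_numericalRange S hx hy hSx hSy ⟨ha, by linarith⟩
  refine ⟨w, hw, ?_⟩
  beta_reduce at hSw ⊢
  rw [inner_smul_sub_smul_id_self T _ _ (mem_sphere_zero_iff_norm.mp hw),
    inv_mul_eq_iff_eq_mul₀ (sub_ne_zero.mpr hpq)] at hSw
  rw [Complex.real_smul, Complex.real_smul, eq_sub_of_add_eq' hab]
  push_cast
  linear_combination hSw

end LinearMap

lemma numRangeMap_eq_inner {n : ℕ} (A : Matrix (Fin n) (Fin n) ℂ)
    (x : EuclideanSpace ℂ (Fin n)) : numRangeMap A x = ⟪x, Matrix.toEuclideanLin A x⟫_ℂ :=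
  dotProduct_comm _ _

/-- The Toeplitz–Hausdorff theorem: the numerical range is convex. -/
theorem stmt_4 {n : ℕ} (A : Matrix (Fin n) (Fin n) ℂ) :
    Convex ℝ (numRange A) := by
  rw [numRange, funext (numRangeMap_eq_inner A)]
  exact (Matrix.toEuclideanLin A).convex_numericalRange
end

section
/- Let A be the 6×6 matrix of Example 3 with parameters x, y, ξ, η, c > 0, x² + y² = ξ² + η² = 4, c < 1 (the strictly upper triangular matrix with nonzero entries a₁₂ = x, a₁₄ = cy, a₂₃ = y, a₄₃ = -cx, a₄₅ = √(1-c²)ξ, a₅₆ = η). Then the eigenvalues of Re(e^{-iθ}A) are independent of θ. -/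
open Matrix

/-- The Hermitian matrix `Re(e^{-iθ} A)`. -/
noncomputable def reRot {n : ℕ} (A : Matrix (Fin n) (Fin n) ℂ) (θ : ℝ) :
    Matrix (Fin n) (Fin n) ℂ :=
  ((1 : ℂ) / 2) • (Complex.exp (-(θ : ℂ) * Complex.I) • A +
    (Complex.exp (-(θ : ℂ) * Complex.I) • A)ᴴ)

open Polynomial in
/-- Conjugation by a unit preserves the characteristic polynomial. -/
lemma my_charpoly_units_conj {R : Type*} [CommRing R] {n : Type*} [DecidableEq n] [Fintype n]
    (u : (Matrix n n R)ˣ) (M : Matrix n n R) :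
    ((u : Matrix n n R) * M * ((u⁻¹ : (Matrix n n R)ˣ) : Matrix n n R)).charpoly
      = M.charpoly := by
  let f : Matrix n n R →+* Matrix n n R[X] := (C : R →+* R[X]).mapMatrix
  let v : (Matrix n n R[X])ˣ := Units.map f.toMonoidHom u
  have hcm : charmatrix ((u : Matrix n n R) * M * ((u⁻¹ : (Matrix n n R)ˣ) : Matrix n n R))
      = (v : Matrix n n R[X]) * charmatrix M * ((v⁻¹ : (Matrix n n R[X])ˣ) : Matrix n n R[X]) := by
    have hv : (↑v : Matrix n n R[X]) = f u := rfl
    have hv' : (↑v⁻¹ : Matrix n n R[X]) = f ↑u⁻¹ := rfl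
    have hs : (v : Matrix n n R[X]) * Matrix.scalar n (X : R[X]) *
        ((v⁻¹ : (Matrix n n R[X])ˣ) : Matrix n n R[X]) = Matrix.scalar n (X : R[X]) := by
      rw [← (Matrix.scalar_commute (X : R[X]) (Commute.all X) ((v : Matrix n n R[X]))).eq,
        mul_assoc, Units.mul_inv, mul_one]
    unfold charmatrix
    rw [mul_sub, sub_mul, hs, hv, hv']
    congr 1
    simp [f]
  rw [Matrix.charpoly, Matrix.charpoly, hcm, Matrix.det_units_conj]

section aux
variable {α : Type*}
lemma cv5 (a : α) (s : Fin 5 → α) : Matrix.vecCons a s 5 = s 4 := rfl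
lemma cv4 (a : α) (s : Fin 4 → α) : Matrix.vecCons a s 4 = s 3 := rfl
lemma cv3 (a : α) (s : Fin 3 → α) : Matrix.vecCons a s 3 = s 2 := rfl
lemma cv2 (a : α) (s : Fin 2 → α) : Matrix.vecCons a s 2 = s 1 := rfl
lemma cv1 (a : α) (s : Fin 1 → α) : Matrix.vecCons a s 1 = s 0 := rfl
end aux

set_option maxHeartbeats 2000000 in
theorem stmt_14 (x y ξ η c : ℝ)
    (hx : 0 < x) (hy : 0 < y) (hξ : 0 < ξ) (hη : 0 < η) (hc : 0 < c) (hc1 : c < 1)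
    (hxy : x ^ 2 + y ^ 2 = 4) (hξη : ξ ^ 2 + η ^ 2 = 4)
    (A : Matrix (Fin 6) (Fin 6) ℂ)
    (hA : A = !![0, (x : ℂ), 0, (c : ℂ) * y, 0, 0;
                 0, 0, (y : ℂ), 0, 0, 0;
                 0, 0, 0, 0, 0, 0;
                 0, 0, -(c : ℂ) * x, 0, (Real.sqrt (1 - c ^ 2) : ℂ) * ξ, 0;
                 0, 0, 0, 0, 0, (η : ℂ);
                 0, 0, 0, 0, 0, 0]) :
    ∀ θ φ : ℝ, (reRot A θ).charpoly = (reRot A φ).charpoly := by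
  have key : ∀ θ : ℝ, (reRot A θ).charpoly = (reRot A 0).charpoly := by
    intro θ
    set nv : Fin 6 → ℂ := ![0,1,2,1,2,3] with hnv
    set D : Matrix (Fin 6) (Fin 6) ℂ :=
      Matrix.diagonal (fun k => Complex.exp ((nv k) * θ * Complex.I)) with hD
    set D' : Matrix (Fin 6) (Fin 6) ℂ :=
      Matrix.diagonal (fun k => Complex.exp (-((nv k) * θ * Complex.I))) with hD'
    have hDD' : D * D' = 1 := by
      rw [hD, hD', Matrix.diagonal_mul_diagonal]
      have : (fun k => Complex.exp ((nv k) * θ * Complex.I) *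
          Complex.exp (-((nv k) * θ * Complex.I))) = fun _ => (1 : ℂ) := by
        funext k
        rw [← Complex.exp_add, add_neg_cancel, Complex.exp_zero]
      rw [this, Matrix.diagonal_one]
    have hD'D : D' * D = 1 := by
      rw [hD, hD', Matrix.diagonal_mul_diagonal]
      have : (fun k => Complex.exp (-((nv k) * θ * Complex.I)) *
          Complex.exp ((nv k) * θ * Complex.I)) = fun _ => (1 : ℂ) := by
        funext k
        rw [← Complex.exp_add, neg_add_cancel, Complex.exp_zero]
      rw [this, Matrix.diagonal_one]
    set u : (Matrix (Fin 6) (Fin 6) ℂ)ˣ := ⟨D, D', hDD', hD'D⟩ with hu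
    have hconj : reRot A θ = (u : Matrix (Fin 6) (Fin 6) ℂ) * reRot A 0 *
        ((u⁻¹ : (Matrix (Fin 6) (Fin 6) ℂ)ˣ) : Matrix (Fin 6) (Fin 6) ℂ) := by
      show reRot A θ = D * reRot A 0 * D'
      subst hA
      ext i j
      fin_cases i <;> fin_cases j <;>
        simp [reRot, hD, hD', hnv, Matrix.mul_diagonal, Matrix.diagonal_mul,
          conjTranspose_apply, ← Complex.exp_conj, _root_.map_mul, _root_.map_neg,
          Complex.conj_I, Complex.conj_ofReal,
          Matrix.vecHead, Matrix.vecTail, Function.comp, cv5, cv4, cv3, cv2, cv1] <;>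
        ring_nf <;>
        simp [mul_assoc, ← Complex.exp_add] <;>
        ring_nf
    rw [hconj, my_charpoly_units_conj]
  intro θ φ
  rw [key θ, key φ]
end
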